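/- arXiv:2006.10742 — 3 statements merged into one kernel-verified Lean document; each statement's English description precedes it below -/
import Mathlib

section
/- For a finite-state MDP with fixed policy π, the operator F defined by F(d)(s_i,s_j) = (1−c)·|R^π_{s_i} − R^π_{s_j}| + c·W₁(d)(P^π_{s_i}, P^π_{s_j}), where W₁(d) denotes the 1-Wasserstein distance induced by the pseudometric d, is a contraction with modulus c on the space of bounded pseudometrics with the supremum metric, for any c ∈ [0,1). -/
/-!
Only the transport term of `bisimF` depends on `d`, so it suffices that `W1 · p q` is
1-Lipschitz for the sup distance on cost functions: every coupling of two probability vectors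
has total mass one, so changing the cost by at most `D` pointwise changes the cost of each
coupling, and hence the infimum over couplings, by at most `D`.
-/

open Finset

structure IsPseudometric {S : Type*} (d : S → S → ℝ) : Prop where
  nonneg : ∀ x y, 0 ≤ d x y
  refl : ∀ x, d x x = 0
  symm : ∀ x y, d x y = d y x
  triangle : ∀ x y z, d x z ≤ d x y + d y z

def IsProb {S : Type*} [Fintype S] (p : S → ℝ) : Prop :=
  (∀ s, 0 ≤ p s) ∧ ∑ s, p s = 1

def IsCoupling {S : Type*} [Fintype S] (γ : S → S → ℝ) (p q : S → ℝ) : Prop :=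
  (∀ x y, 0 ≤ γ x y) ∧ (∀ x, ∑ y, γ x y = p x) ∧ (∀ y, ∑ x, γ x y = q y)

noncomputable def W1 {S : Type*} [Fintype S] (d : S → S → ℝ) (p q : S → ℝ) : ℝ :=
  sInf { r | ∃ γ : S → S → ℝ, IsCoupling γ p q ∧ r = ∑ x, ∑ y, d x y * γ x y }

noncomputable def bisimF {S : Type*} [Fintype S] (R : S → ℝ) (P : S → S → ℝ) (c : ℝ)
    (d : S → S → ℝ) : S → S → ℝ :=
  fun x y => (1 - c) * |R x - R y| + c * W1 d (P x) (P y)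

noncomputable def bisimFA {S A : Type*} [Fintype S] [Fintype A] [Nonempty A]
    (R : S → A → ℝ) (P : S → A → S → ℝ) (c : ℝ) (d : S → S → ℝ) : S → S → ℝ :=
  fun x y => ⨆ a : A, ((1 - c) * |R x a - R y a| + c * W1 d (P x a) (P y a))

section Coupling

variable {S : Type*} [Fintype S] {γ : S → S → ℝ} {p q : S → ℝ}

theorem isCoupling_mul (hp : IsProb p) (hq : IsProb q) :
    IsCoupling (fun x y => p x * q y) p q :=
  ⟨fun x y => mul_nonneg (hp.1 x) (hq.1 y),
    fun x => by rw [← mul_sum, hq.2, mul_one],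
    fun y => by rw [← sum_mul, hp.2, one_mul]⟩

theorem IsCoupling.sum_sum_const_mul (hγ : IsCoupling γ p q) (hp : IsProb p) (a : ℝ) :
    ∑ x, ∑ y, a * γ x y = a := by
  simp only [← mul_sum, hγ.2.1, hp.2, mul_one]

theorem IsCoupling.sum_sum_mul_le_sum_sum_mul (hγ : IsCoupling γ p q)
    {f g : S → S → ℝ} (hfg : ∀ x y, f x y ≤ g x y) :
    ∑ x, ∑ y, f x y * γ x y ≤ ∑ x, ∑ y, g x y * γ x y :=
  sum_le_sum fun x _ => sum_le_sum fun y _ => mul_le_mul_of_nonneg_right (hfg x y) (hγ.1 x y)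

end Coupling

section Wasserstein

variable {S : Type*} [Fintype S] {p q : S → ℝ}

theorem bddBelow_couplingCosts (hp : IsProb p) (d : S → S → ℝ) :
    BddBelow { r | ∃ γ : S → S → ℝ, IsCoupling γ p q ∧ r = ∑ x, ∑ y, d x y * γ x y } := by
  obtain ⟨m, hm⟩ := (Set.finite_range (Function.uncurry d)).bddBelow
  refine ⟨m, ?_⟩
  rintro _ ⟨γ, hγ, rfl⟩
  calc m = ∑ x, ∑ y, m * γ x y := (hγ.sum_sum_const_mul hp m).symm
    _ ≤ ∑ x, ∑ y, d x y * γ x y :=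
      hγ.sum_sum_mul_le_sum_sum_mul fun x y => hm ⟨(x, y), rfl⟩

theorem W1_le_W1_add (hp : IsProb p) (hq : IsProb q) {d d' : S → S → ℝ} {D : ℝ}
    (hD : ∀ x y, d x y ≤ d' x y + D) :
    W1 d p q ≤ W1 d' p q + D := by
  rw [← sub_le_iff_le_add]
  refine le_csInf ⟨_, _, isCoupling_mul hp hq, rfl⟩ ?_
  rintro _ ⟨γ, hγ, rfl⟩
  rw [sub_le_iff_le_add]
  calc W1 d p q ≤ ∑ x, ∑ y, d x y * γ x y :=
        csInf_le (bddBelow_couplingCosts hp d) ⟨γ, hγ, rfl⟩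
    _ ≤ ∑ x, ∑ y, (d' x y + D) * γ x y := hγ.sum_sum_mul_le_sum_sum_mul hD
    _ = ∑ x, ∑ y, d' x y * γ x y + D := by
      simp only [add_mul, sum_add_distrib, hγ.sum_sum_const_mul hp]

theorem abs_W1_sub_W1_le (hp : IsProb p) (hq : IsProb q) {d d' : S → S → ℝ} {D : ℝ}
    (hD : ∀ x y, |d x y - d' x y| ≤ D) :
    |W1 d p q - W1 d' p q| ≤ D := by
  refine abs_sub_le_iff.2 ⟨sub_le_iff_le_add'.2 ?_, sub_le_iff_le_add'.2 ?_⟩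
  · exact W1_le_W1_add hp hq fun x y => sub_le_iff_le_add'.1 (abs_sub_le_iff.1 (hD x y)).1
  · exact W1_le_W1_add hp hq fun x y => sub_le_iff_le_add'.1 (abs_sub_le_iff.1 (hD x y)).2

end Wasserstein

theorem bisimF_sub_bisimF {S : Type*} [Fintype S] (R : S → ℝ) (P : S → S → ℝ) (c : ℝ)
    (d d' : S → S → ℝ) (x y : S) :
    bisimF R P c d x y - bisimF R P c d' x y = c * (W1 d (P x) (P y) - W1 d' (P x) (P y)) := by
  simp only [bisimF]
  ring

theorem stmt_2_general {S : Type*} [Fintype S]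
    (R : S → ℝ) (P : S → S → ℝ) (hP : ∀ s, IsProb (P s))
    (c : ℝ) (hc0 : 0 ≤ c)
    (d d' : S → S → ℝ) :
    ⨆ p : S × S, |bisimF R P c d p.1 p.2 - bisimF R P c d' p.1 p.2| ≤
      c * ⨆ p : S × S, |d p.1 p.2 - d' p.1 p.2| := by
  set D := ⨆ p : S × S, |d p.1 p.2 - d' p.1 p.2|
  have hD : ∀ x y, |d x y - d' x y| ≤ D := fun x y =>
    le_ciSup (f := fun p : S × S => |d p.1 p.2 - d' p.1 p.2|) (Set.finite_range _).bddAbove (x, y)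
  have hD0 : 0 ≤ D := Real.iSup_nonneg fun _ => abs_nonneg _
  refine Real.iSup_le (fun ⟨x, y⟩ => ?_) (mul_nonneg hc0 hD0)
  rw [bisimF_sub_bisimF, abs_mul, abs_of_nonneg hc0]
  exact mul_le_mul_of_nonneg_left (abs_W1_sub_W1_le (hP x) (hP y) hD) hc0

/-- the on-policy bisimulation operator is a contraction with modulus
`c` on bounded pseudometrics with the supremum metric, for any `c ∈ [0,1)`. -/
theorem stmt_2 {S : Type*} [Fintype S]
    (R : S → ℝ) (P : S → S → ℝ) (hP : ∀ s, IsProb (P s))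
    (c : ℝ) (hc0 : 0 ≤ c) (hc1 : c < 1)
    (d d' : S → S → ℝ) (hd : IsPseudometric d) (hd' : IsPseudometric d') :
    ⨆ p : S × S, |bisimF R P c d p.1 p.2 - bisimF R P c d' p.1 p.2| ≤
      c * ⨆ p : S × S, |d p.1 p.2 - d' p.1 p.2| :=
  stmt_2_general R P hP c hc0 d d'
end

section
/- In a finite MDP, let B be a bisimulation relation (states s_i ≡_B s_j satisfy R(s_i,a) = R(s_j,a) and P(G|s_i,a) = P(G|s_j,a) for all actions a and all equivalence classes G). Then any two bisimilar states have the same optimal value: s_i ≡_B s_j implies V*(s_i) = V*(s_j). -/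
open Finset

/-!
Let `D` be the largest gap `V u - V v` over bisimilar pairs `(u, v)`. For bisimilar `x, y` the
rewards agree, and the expected values of `V` under `P x a` and `P y a` differ by at most `D`:
squeeze `V` between the class-wise maximum `M` of `V` and `M - D`, and note that `M`, being
constant on classes, is integrated identically by two kernels giving the same mass to every class.
So the Bellman equation gives `D ≤ γ * D`, whence `D ≤ 0`.
-/

section Bisimulation

variable {S : Type*} [Fintype S] {B : S → S → Prop} [DecidableRel B]

theorem sum_mul_eq_of_classSum_eq (hB : Equivalence B) {p q F : S → ℝ}
    (hpq : ∀ z, ∑ s ∈ univ.filter (B z), p s = ∑ s ∈ univ.filter (B z), q s)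
    (hF : ∀ u v, B u v → F u = F v) :
    ∑ s, p s * F s = ∑ s, q s * F s := by
  classical
  let r : Setoid S := ⟨B, hB⟩
  have hclass : ∀ (w : S → ℝ) (z : S),
      ∑ s ∈ univ.filter (fun s => (⟦s⟧ : Quotient r) = ⟦z⟧), w s * F s
        = (∑ s ∈ univ.filter (B z), w s) * F z := by
    intro w z
    have hfilter : univ.filter (fun s => (⟦s⟧ : Quotient r) = ⟦z⟧) = univ.filter (B z) :=
      filter_congr fun s _ => Quotient.eq.trans ⟨hB.symm, hB.symm⟩
    rw [hfilter, sum_mul]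
    exact sum_congr rfl fun s hs => by rw [hF s z (hB.symm (mem_filter.mp hs).2)]
  rw [← sum_fiberwise univ (fun s => (⟦s⟧ : Quotient r)),
    ← sum_fiberwise univ (fun s => (⟦s⟧ : Quotient r))]
  refine sum_congr rfl fun c _ => ?_
  induction c using Quotient.ind with
  | _ z => rw [hclass, hclass, hpq]

theorem exists_classConstant_between (hB : Equivalence B) (V : S → ℝ) {D : ℝ}
    (hD : ∀ u v, B u v → V u - V v ≤ D) :
    ∃ M : S → ℝ, (∀ u v, B u v → M u = M v) ∧ (∀ s, V s ≤ M s) ∧ ∀ s, M s ≤ V s + D := by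
  have hmem : ∀ z, z ∈ univ.filter (B z) := fun z => mem_filter.mpr ⟨mem_univ z, hB.refl z⟩
  refine ⟨fun z => (univ.filter (B z)).sup' ⟨z, hmem z⟩ V, fun u v huv => ?_,
    fun s => le_sup' V (hmem s), fun s => sup'_le _ _ fun u hu => ?_⟩
  · have hclass : univ.filter (B u) = univ.filter (B v) :=
      filter_congr fun w _ => ⟨hB.trans (hB.symm huv), hB.trans huv⟩
    simp only [hclass]
  · linarith [hD u s (hB.symm (mem_filter.mp hu).2)]

theorem sum_mul_le_sum_mul_add (hB : Equivalence B) {p q V : S → ℝ} (hp : ∀ s, 0 ≤ p s)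
    (hq : IsProb q) (hpq : ∀ z, ∑ s ∈ univ.filter (B z), p s = ∑ s ∈ univ.filter (B z), q s)
    {D : ℝ} (hD : ∀ u v, B u v → V u - V v ≤ D) :
    ∑ s, p s * V s ≤ ∑ s, q s * V s + D := by
  obtain ⟨M, hMB, hVM, hMV⟩ := exists_classConstant_between hB V hD
  calc ∑ s, p s * V s ≤ ∑ s, p s * M s :=
        sum_le_sum fun s _ => mul_le_mul_of_nonneg_left (hVM s) (hp s)
    _ = ∑ s, q s * M s := sum_mul_eq_of_classSum_eq hB hpq hMB
    _ ≤ ∑ s, q s * (V s + D) :=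
        sum_le_sum fun s _ => mul_le_mul_of_nonneg_left (hMV s) (hq.1 s)
    _ = ∑ s, q s * V s + D := by
        simp only [mul_add, sum_add_distrib, ← sum_mul, hq.2, one_mul]

end Bisimulation

theorem le_of_rel_of_gap_le_mul_gap {S : Type*} [Finite S] {B : S → S → Prop} {V : S → ℝ}
    {γ : ℝ} (hγ1 : γ < 1)
    (hgap : ∀ D, (∀ u v, B u v → V u - V v ≤ D) → ∀ u v, B u v → V u - V v ≤ γ * D)
    {x y : S} (hxy : B x y) : V x ≤ V y := by
  have : Nonempty {p : S × S // B p.1 p.2} := ⟨⟨(x, y), hxy⟩⟩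
  obtain ⟨⟨⟨u, v⟩, huv⟩, hmax⟩ :=
    Finite.exists_max fun p : {p : S × S // B p.1 p.2} => V p.1.1 - V p.1.2
  have hcontract := hgap (V u - V v) (fun a b hab => hmax ⟨(a, b), hab⟩) u v huv
  have := hmax ⟨(x, y), hxy⟩
  nlinarith

theorem bellman_le_add {S A : Type*} [Finite A] [Nonempty A] (R : S → A → ℝ)
    (E : S → A → ℝ) {γ : ℝ} (hγ0 : 0 ≤ γ) {V : S → ℝ} (hV : ∀ s, V s = ⨆ a, (R s a + γ * E s a))
    {x y : S} (hR : ∀ a, R x a = R y a) {D : ℝ} (hE : ∀ a, E x a ≤ E y a + D) :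
    V x ≤ V y + γ * D := by
  rw [hV x, hV y]
  refine ciSup_le fun a => ?_
  have hbdd : BddAbove (Set.range fun a => R y a + γ * E y a) := (Set.finite_range _).bddAbove
  calc R x a + γ * E x a ≤ R y a + γ * E y a + γ * D := by
        rw [hR a]; linarith [mul_le_mul_of_nonneg_left (hE a) hγ0]
    _ ≤ _ := add_le_add_left (le_ciSup hbdd a) _

/-- bisimilar states (under a bisimulation relation `B`) have the same
optimal value. -/
theorem stmt_12 {S A : Type*} [Fintype S] [Fintype A] [Nonempty A]
    (R : S → A → ℝ) (P : S → A → S → ℝ) (hP : ∀ s a, IsProb (P s a))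
    (γ : ℝ) (hγ0 : 0 ≤ γ) (hγ1 : γ < 1)
    (B : S → S → Prop) [DecidableRel B] (hB : Equivalence B)
    (hR : ∀ s_i s_j, B s_i s_j → ∀ a, R s_i a = R s_j a)
    (hPB : ∀ s_i s_j, B s_i s_j → ∀ a z,
      ∑ s' ∈ univ.filter (fun s' => B z s'), P s_i a s' =
        ∑ s' ∈ univ.filter (fun s' => B z s'), P s_j a s')
    (V : S → ℝ) (hV : ∀ s, V s = ⨆ a : A, (R s a + γ * ∑ s', P s a s' * V s')) :
    ∀ s_i s_j, B s_i s_j → V s_i = V s_j := by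
  have hgap : ∀ D, (∀ u v, B u v → V u - V v ≤ D) → ∀ u v, B u v → V u - V v ≤ γ * D := by
    intro D hD x y hxy
    have := bellman_le_add R (fun s a => ∑ s', P s a s' * V s') hγ0 hV (hR x y hxy)
      fun a => sum_mul_le_sum_mul_add hB (hP x a).1 (hP y a) (hPB x y hxy a) hD
    linarith
  intro s_i s_j hij
  exact le_antisymm (le_of_rel_of_gap_le_mul_gap hγ1 hgap hij)
    (le_of_rel_of_gap_le_mul_gap hγ1 hgap (hB.symm hij))
end

section
/- Consider a finite MDP where the state factorizes as S = S¹ × S² and suppose: (i) the reward R depends only on the S¹-component, R(s¹,s²) = r(s¹); and (ii) transitions factorize with the S¹-component's dynamics independent of S², i.e., P((s¹',s²')|(s¹,s²),a) = P₁(s¹'|s¹,a)·P₂(s²'|s¹,s²,a). Then any two states sharing the same S¹-component have bisimulation distance zero: d̃((s¹,s²_i),(s¹,s²_j)) = 0, where d̃ is the fixed point of F(d)(x,y) = max_a [(1−c)|R(x)−R(y)| + c·W₁(d)(P_x^a, P_y^a)], c ∈ [0,1). -/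
open Finset

/-!
Let `M` be the largest distance between two states with the same first component. For such a
pair the rewards agree, and the coupling that moves the two first components in lockstep (both
follow the same kernel `P₁`) and the second components independently is supported on pairs with
equal first components. The fixed-point equation therefore bounds the distance of such a pair by
`c * M`, so `M ≤ c * M`, and `c < 1` forces `M = 0`.
-/

section Coupling

variable {S : Type*} [Fintype S]

theorem W1_le_of_isCoupling {d : S → S → ℝ} (hd : ∀ x y, 0 ≤ d x y) {p q : S → ℝ}
    {γ : S → S → ℝ} (hγ : IsCoupling γ p q) : W1 d p q ≤ ∑ x, ∑ y, d x y * γ x y := by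
  refine csInf_le ⟨0, ?_⟩ ⟨γ, hγ, rfl⟩
  rintro _ ⟨γ', hγ', rfl⟩
  exact sum_nonneg fun x _ => sum_nonneg fun y _ => mul_nonneg (hd x y) (hγ'.1 x y)

theorem sum_mul_coupling_le_of_support {d : S → S → ℝ} {p q : S → ℝ} {γ : S → S → ℝ} {M : ℝ}
    (hγ : IsCoupling γ p q) (hp : ∑ x, p x = 1) (hM : ∀ x y, γ x y ≠ 0 → d x y ≤ M) :
    ∑ x, ∑ y, d x y * γ x y ≤ M :=
  calc ∑ x, ∑ y, d x y * γ x y ≤ ∑ x, ∑ y, M * γ x y := by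
        refine sum_le_sum fun x _ => sum_le_sum fun y _ => ?_
        by_cases h : γ x y = 0
        · simp [h]
        · exact mul_le_mul_of_nonneg_right (hM x y h) (hγ.1 x y)
    _ = M := by simp only [← mul_sum, hγ.2.1, hp, mul_one]

end Coupling

section SyncCoupling

variable {S₁ S₂ : Type*} [DecidableEq S₁]

def syncCoupling (p₁ : S₁ → ℝ) (q q' : S₂ → ℝ) : S₁ × S₂ → S₁ × S₂ → ℝ :=
  fun t t' => if t.1 = t'.1 then p₁ t.1 * q t.2 * q' t'.2 else 0

theorem isCoupling_syncCoupling [Fintype S₁] [Fintype S₂] {p₁ : S₁ → ℝ} {q q' : S₂ → ℝ}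
    (hp₁ : ∀ u, 0 ≤ p₁ u) (hq : IsProb q) (hq' : IsProb q') :
    IsCoupling (syncCoupling p₁ q q') (fun t => p₁ t.1 * q t.2) (fun t => p₁ t.1 * q' t.2) := by
  refine ⟨fun t t' => ?_, fun t => ?_, fun t' => ?_⟩
  · unfold syncCoupling
    split
    · exact mul_nonneg (mul_nonneg (hp₁ _) (hq.1 _)) (hq'.1 _)
    · exact le_rfl
  · simp only [syncCoupling, Fintype.sum_prod_type, sum_ite_irrel, sum_const_zero, sum_ite_eq,
      mem_univ, if_true, ← mul_sum, hq'.2, mul_one]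
  · simp only [syncCoupling, Fintype.sum_prod_type, sum_ite_irrel, sum_const_zero, sum_ite_eq',
      mem_univ, if_true, ← sum_mul, ← mul_sum, hq.2, mul_one]

theorem fst_eq_of_syncCoupling_ne_zero {p₁ : S₁ → ℝ} {q q' : S₂ → ℝ} {t t' : S₁ × S₂}
    (h : syncCoupling p₁ q q' t t' ≠ 0) : t.1 = t'.1 := by
  by_contra hne
  exact h (if_neg hne)

end SyncCoupling

theorem sum_prod_mul_eq_one {S₁ S₂ : Type*} [Fintype S₁] [Fintype S₂] {p₁ : S₁ → ℝ}
    {q : S₂ → ℝ} (hp₁ : IsProb p₁) (hq : IsProb q) : ∑ t : S₁ × S₂, p₁ t.1 * q t.2 = 1 := by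
  rw [Fintype.sum_prod_type, ← sum_mul_sum, hp₁.2, hq.2, mul_one]

theorem W1_prod_le {S₁ S₂ : Type*} [Fintype S₁] [Fintype S₂] {d : S₁ × S₂ → S₁ × S₂ → ℝ}
    (hd : ∀ x y, 0 ≤ d x y) {M : ℝ} (hM : ∀ u v w, d (u, v) (u, w) ≤ M) {p₁ : S₁ → ℝ}
    {q q' : S₂ → ℝ} (hp₁ : IsProb p₁) (hq : IsProb q) (hq' : IsProb q') :
    W1 d (fun t => p₁ t.1 * q t.2) (fun t => p₁ t.1 * q' t.2) ≤ M := by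
  classical
  have hγ := isCoupling_syncCoupling hp₁.1 hq hq'
  refine (W1_le_of_isCoupling hd hγ).trans
    (sum_mul_coupling_le_of_support hγ (sum_prod_mul_eq_one hp₁ hq) fun t t' ht => ?_)
  obtain ⟨u, v⟩ := t
  obtain ⟨u', w⟩ := t'
  obtain rfl : u = u' := fst_eq_of_syncCoupling_ne_zero ht
  exact hM u v w

theorem bisim_le_mul_of_fst_eq {S₁ S₂ A : Type*} [Fintype S₁] [Fintype S₂] [Fintype A]
    [Nonempty A] {R : S₁ × S₂ → A → ℝ} {r : S₁ → A → ℝ} (hR : ∀ s a, R s a = r s.1 a)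
    {P : S₁ × S₂ → A → S₁ × S₂ → ℝ} {P₁ : S₁ → A → S₁ → ℝ} (hP₁ : ∀ s a, IsProb (P₁ s a))
    {P₂ : S₁ × S₂ → A → S₂ → ℝ} (hP₂ : ∀ s a, IsProb (P₂ s a))
    (hfact : ∀ s a t, P s a t = P₁ s.1 a t.1 * P₂ s a t.2) {c : ℝ} (hc0 : 0 ≤ c)
    {d : S₁ × S₂ → S₁ × S₂ → ℝ} (hd : ∀ x y, 0 ≤ d x y) (hfix : bisimFA R P c d = d)
    {M : ℝ} (hM : ∀ u v w, d (u, v) (u, w) ≤ M) {x y : S₁ × S₂} (hxy : x.1 = y.1) :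
    d x y ≤ c * M := by
  rw [← hfix]
  refine ciSup_le fun a => ?_
  have hPx : P x a = fun t => P₁ x.1 a t.1 * P₂ x a t.2 := funext (hfact x a)
  have hPy : P y a = fun t => P₁ x.1 a t.1 * P₂ y a t.2 := funext fun t => by rw [hfact, hxy]
  rw [hR, hR, hxy, sub_self, abs_zero, mul_zero, zero_add, hPx, hPy]
  exact mul_le_mul_of_nonneg_left (W1_prod_le hd hM (hP₁ _ a) (hP₂ x a) (hP₂ y a)) hc0

theorem le_zero_of_le_mul_of_bound {ι : Type*} [Finite ι] {f : ι → ℝ} {c : ℝ} (hc : c < 1)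
    (h : ∀ M, (∀ i, f i ≤ M) → ∀ i, f i ≤ c * M) (i : ι) : f i ≤ 0 := by
  have : Nonempty ι := ⟨i⟩
  obtain ⟨j, hj⟩ := Finite.exists_max f
  have hfj : f j ≤ 0 := by nlinarith [h (f j) hj j]
  exact (hj i).trans hfj

theorem stmt_16_general {S₁ S₂ A : Type*} [Fintype S₁] [Fintype S₂] [Fintype A] [Nonempty A]
    (R : S₁ × S₂ → ℝ) (r : S₁ → ℝ) (hR : ∀ s, R s = r s.1)
    (P : S₁ × S₂ → A → S₁ × S₂ → ℝ)
    (P₁ : S₁ → A → S₁ → ℝ) (hP₁ : ∀ s a, IsProb (P₁ s a))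
    (P₂ : S₁ × S₂ → A → S₂ → ℝ) (hP₂ : ∀ s a, IsProb (P₂ s a))
    (hfact : ∀ s a t, P s a t = P₁ s.1 a t.1 * P₂ s a t.2)
    (c : ℝ) (hc0 : 0 ≤ c) (hc1 : c < 1)
    (dt : S₁ × S₂ → S₁ × S₂ → ℝ) (hdt : IsPseudometric dt)
    (hfix : bisimFA (fun s (_ : A) => R s) P c dt = dt) :
    ∀ (s₁ : S₁) (s₂_i s₂_j : S₂), dt (s₁, s₂_i) (s₁, s₂_j) = 0 := by
  intro s₁ v w
  have hstep : ∀ M, (∀ u v w, dt (u, v) (u, w) ≤ M) → ∀ u v w, dt (u, v) (u, w) ≤ c * M :=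
    fun M hM u v w => bisim_le_mul_of_fst_eq (r := fun s _ => r s) (fun s _ => hR s) hP₁ hP₂
      hfact hc0 hdt.nonneg hfix hM rfl
  refine le_antisymm ?_ (hdt.nonneg _ _)
  exact le_zero_of_le_mul_of_bound (f := fun t : S₁ × S₂ × S₂ => dt (t.1, t.2.1) (t.1, t.2.2))
    hc1 (fun M hM t => hstep M (fun u v w => hM (u, v, w)) t.1 t.2.1 t.2.2) (s₁, v, w)

/-- in a factored MDP where the reward depends only on the first factor
and the first factor's dynamics are independent of the second, states sharing the same
first component have bisimulation distance zero. -/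
theorem stmt_16 {S₁ S₂ A : Type*} [Fintype S₁] [Fintype S₂] [Fintype A] [Nonempty A]
    (R : S₁ × S₂ → ℝ) (r : S₁ → ℝ) (hR : ∀ s, R s = r s.1)
    (P : S₁ × S₂ → A → S₁ × S₂ → ℝ) (hP : ∀ s a, IsProb (P s a))
    (P₁ : S₁ → A → S₁ → ℝ) (hP₁ : ∀ s a, IsProb (P₁ s a))
    (P₂ : S₁ × S₂ → A → S₂ → ℝ) (hP₂ : ∀ s a, IsProb (P₂ s a))
    (hfact : ∀ s a t, P s a t = P₁ s.1 a t.1 * P₂ s a t.2)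
    (c : ℝ) (hc0 : 0 ≤ c) (hc1 : c < 1)
    (dt : S₁ × S₂ → S₁ × S₂ → ℝ) (hdt : IsPseudometric dt)
    (hfix : bisimFA (fun s (_ : A) => R s) P c dt = dt) :
    ∀ (s₁ : S₁) (s₂_i s₂_j : S₂), dt (s₁, s₂_i) (s₁, s₂_j) = 0 :=
  stmt_16_general R r hR P P₁ hP₁ P₂ hP₂ hfact c hc0 hc1 dt hdt hfix
end
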